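/- Let A be a differential ring and b_1, …, b_n ∈ A such that the smallest radical differential ideal {b_1, …, b_n} equals A. Then the open sets X_{b_1}, …, X_{b_n} cover X = Spec^Δ A; conversely, if X_{b_1}, …, X_{b_n} cover X and A is a Keigher ring, then {b_1, …, b_n} = A. -/

import Mathlib

/-! A radical differential ideal `T` satisfies `a c ∈ T → a (δ c) ∈ T`, so the colon ideal
`T : y` of a radical differential ideal is again radical and differential. Consequently a
radical differential ideal `M` maximal with respect to avoiding `a` is prime: if `x y ∈ M` with
`x, y ∉ M`, then `a` lies in both `{M, x} ⊆ M : y` and `{M, y}`, so `a y ∈ M`, hence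
`{M, y} ⊆ M : a` and `a² ∈ M`. Zorn's lemma provides such an `M` above any radical differential
ideal avoiding `a`, and the theorem follows from `1 ∉ {b₁, …, bₙ}`. -/

/-- An ideal is a differential ideal w.r.t. a family of derivation maps `d`. -/
def IsDiffIdeal {A : Type*} [CommRing A] {k : ℕ} (d : Fin k → A → A) (I : Ideal A) : Prop :=
  ∀ i : Fin k, ∀ x ∈ I, d i x ∈ I

/-- The differential spectrum: prime differential ideals, with the Kolchin topology
(the subspace topology induced from the Zariski topology on `PrimeSpectrum`). -/
abbrev DiffSpec {A : Type*} [CommRing A] {k : ℕ} (d : Fin k → A → A) :=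
  {p : PrimeSpectrum A // IsDiffIdeal d p.asIdeal}

/-- A Keigher ring: the radical of every differential ideal is differential. -/
def IsKeigher {A : Type*} [CommRing A] {k : ℕ} (d : Fin k → A → A) : Prop :=
  ∀ I : Ideal A, IsDiffIdeal d I → IsDiffIdeal d I.radical

/-- `radDiffGen d E` is the smallest radical differential ideal containing `E`. -/
def radDiffGen {A : Type*} [CommRing A] {k : ℕ} (d : Fin k → A → A) (E : Set A) : Ideal A :=
  sInf {I : Ideal A | E ⊆ I ∧ I.IsRadical ∧ IsDiffIdeal d I}

section RadDiffGen

variable {A : Type*} [CommRing A] {k : ℕ} (d : Fin k → A → A)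

theorem subset_radDiffGen (E : Set A) : E ⊆ radDiffGen d E := fun _ hx =>
  Submodule.mem_sInf.2 fun _ hI => hI.1 hx

theorem isRadical_radDiffGen (E : Set A) : (radDiffGen d E).IsRadical := by
  rintro z ⟨m, hm⟩
  exact Submodule.mem_sInf.2 fun I hI => hI.2.1 ⟨m, Submodule.mem_sInf.1 hm I hI⟩

theorem isDiffIdeal_radDiffGen (E : Set A) : IsDiffIdeal d (radDiffGen d E) := fun i _ hx =>
  Submodule.mem_sInf.2 fun I hI => hI.2.2 i _ (Submodule.mem_sInf.1 hx I hI)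

variable {d}

theorem radDiffGen_le {E : Set A} {I : Ideal A} (hE : E ⊆ I) (hrad : I.IsRadical)
    (hdiff : IsDiffIdeal d I) : radDiffGen d E ≤ I :=
  sInf_le ⟨hE, hrad, hdiff⟩

theorem sSup_mem_of_directedOn {a : A} {c : Set (Ideal A)}
    (hc : c ⊆ {J | J.IsRadical ∧ IsDiffIdeal d J ∧ a ∉ J}) (hne : c.Nonempty)
    (hdir : DirectedOn (· ≤ ·) c) :
    (sSup c).IsRadical ∧ IsDiffIdeal d (sSup c) ∧ a ∉ sSup c := by
  have hmem (z : A) : z ∈ sSup c ↔ ∃ J ∈ c, z ∈ J :=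
    Submodule.mem_sSup_of_directed hne hdir
  refine ⟨?_, ?_, ?_⟩
  · rintro z ⟨m, hm⟩
    obtain ⟨J, hJ, hzJ⟩ := (hmem _).1 hm
    exact (hmem z).2 ⟨J, hJ, (hc hJ).1 ⟨m, hzJ⟩⟩
  · intro i z hz
    obtain ⟨J, hJ, hzJ⟩ := (hmem z).1 hz
    exact (hmem _).2 ⟨J, hJ, (hc hJ).2.1 i z hzJ⟩
  · intro ha
    obtain ⟨J, hJ, haJ⟩ := (hmem a).1 ha
    exact (hc hJ).2.2 haJ

end RadDiffGen

theorem Derivation.mul_apply_mem_of_mul_mem {R A : Type*} [CommSemiring R] [CommRing A]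
    [Algebra R A] (D : Derivation R A A) {T : Ideal A} (hrad : T.IsRadical)
    (hD : ∀ x ∈ T, D x ∈ T) {a c : A} (hac : a * c ∈ T) : a * D c ∈ T := by
  refine hrad ⟨2, ?_⟩
  have : (a * D c) ^ 2 = a * D c * D (a * c) - a * c * (D a * D c) := by
    rw [Derivation.leibniz, smul_eq_mul, smul_eq_mul]
    ring
  rw [this]
  exact T.sub_mem (T.mul_mem_left _ (hD _ hac)) (T.mul_mem_right _ hac)

section Derivations

variable {R A : Type*} [CommSemiring R] [CommRing A] [Algebra R A] {k : ℕ}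
  {δ : Fin k → Derivation R A A}

theorem isRadical_colon_singleton {T : Ideal A} (hrad : T.IsRadical) (y : A) :
    (T.colon {y}).IsRadical := by
  rintro z ⟨m, hm⟩
  rw [Submodule.mem_colon_singleton, smul_eq_mul] at hm ⊢
  refine hrad ⟨m + 1, ?_⟩
  rw [show (z * y) ^ (m + 1) = z ^ m * y * (z * y ^ m) by ring]
  exact T.mul_mem_right _ hm

theorem isDiffIdeal_colon_singleton {T : Ideal A} (hrad : T.IsRadical)
    (hdiff : IsDiffIdeal (fun i => ⇑(δ i)) T) (y : A) :
    IsDiffIdeal (fun i => ⇑(δ i)) (T.colon {y}) := by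
  intro i z hz
  simp only [Submodule.mem_colon_singleton, smul_eq_mul] at hz ⊢
  rw [mul_comm] at hz ⊢
  exact (δ i).mul_apply_mem_of_mul_mem hrad (hdiff i) hz

theorem mul_mem_of_ha_insert {M : Ideal A} (hrad : M.IsRadical)
    (hdiff : IsDiffIdeal (fun i => ⇑(δ i)) M) {x y a : A} (hxy : x * y ∈ M)
    (ha : a ∈ radDiffGen (fun i => ⇑(δ i)) (insert x M)) : a * y ∈ M := by
  have hle : radDiffGen (fun i => ⇑(δ i)) (insert x M) ≤ M.colon {y} := by
    refine radDiffGen_le ?_ (isRadical_colon_singleton hrad y)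
      (isDiffIdeal_colon_singleton hrad hdiff y)
    rintro z (rfl | hz) <;>
      simp only [SetLike.mem_coe, Submodule.mem_colon_singleton, smul_eq_mul]
    · exact hxy
    · exact M.mul_mem_right y hz
  simpa using hle ha

theorem isPrime_of_maximal_notMem {M : Ideal A} {a : A}
    (hM : Maximal (fun J : Ideal A => J.IsRadical ∧ IsDiffIdeal (fun i => ⇑(δ i)) J ∧ a ∉ J)
      M) :
    M.IsPrime := by
  obtain ⟨⟨hrad, hdiff, haM⟩, hmax⟩ := hM
  have ha_insert (x : A) (hx : x ∉ M) : a ∈ radDiffGen (fun i => ⇑(δ i)) (insert x M) := by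
    by_contra ha
    have hle : M ≤ radDiffGen (fun i => ⇑(δ i)) (insert x M) := fun z hz =>
      subset_radDiffGen _ _ (Set.mem_insert_of_mem _ hz)
    exact hx (hmax ⟨isRadical_radDiffGen _ _, isDiffIdeal_radDiffGen _ _, ha⟩ hle
      (subset_radDiffGen _ _ (Set.mem_insert x _)))
  refine ⟨fun htop => haM (htop ▸ Submodule.mem_top), fun {x y} hxy => ?_⟩
  by_contra! hxy'
  have hay : y * a ∈ M := mul_comm a y ▸
    mul_mem_of_ha_insert hrad hdiff hxy (ha_insert x hxy'.1)
  have haa : a * a ∈ M := mul_mem_of_ha_insert hrad hdiff hay (ha_insert y hxy'.2)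
  exact haM (hrad ⟨2, by rwa [pow_two]⟩)

theorem exists_diffSpec_le_notMem {I : Ideal A} (hrad : I.IsRadical)
    (hdiff : IsDiffIdeal (fun i => ⇑(δ i)) I) {a : A} (ha : a ∉ I) :
    ∃ p : DiffSpec (fun i => ⇑(δ i)), I ≤ p.1.asIdeal ∧ a ∉ p.1.asIdeal := by
  obtain ⟨M, hIM, hM⟩ := zorn_le_nonempty₀
    {J : Ideal A | J.IsRadical ∧ IsDiffIdeal (fun i => ⇑(δ i)) J ∧ a ∉ J}
    (fun c hc hchain J hJ => ⟨sSup c, sSup_mem_of_directedOn hc ⟨J, hJ⟩ hchain.directedOn,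
      fun _ => le_sSup⟩) I ⟨hrad, hdiff, ha⟩
  exact ⟨⟨⟨M, isPrime_of_maximal_notMem hM⟩, hM.1.2.1⟩, hIM, hM.1.2.2⟩

end Derivations

theorem stmt19_general {A : Type*} [CommRing A] {k : ℕ} (δ : Fin k → Derivation ℤ A A)
    (n : ℕ) (b : Fin n → A) :
    (radDiffGen (fun i => ⇑(δ i)) (Set.range b) = ⊤ →
      ∀ p : DiffSpec (fun i => ⇑(δ i)), ∃ j, b j ∉ p.1.asIdeal) ∧
    (IsKeigher (fun i => ⇑(δ i)) →
      (∀ p : DiffSpec (fun i => ⇑(δ i)), ∃ j, b j ∉ p.1.asIdeal) →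
      radDiffGen (fun i => ⇑(δ i)) (Set.range b) = ⊤) := by
  constructor
  · intro htop p
    by_contra! hb
    have hle : radDiffGen (fun i => ⇑(δ i)) (Set.range b) ≤ p.1.asIdeal :=
      radDiffGen_le (Set.range_subset_iff.2 hb) p.1.isPrime.isRadical p.2
    exact p.1.isPrime.ne_top (top_unique (htop ▸ hle))
  · intro _ hcover
    by_contra hne
    obtain ⟨p, hle, -⟩ := exists_diffSpec_le_notMem (isRadical_radDiffGen _ _)
      (isDiffIdeal_radDiffGen _ _) ((Ideal.ne_top_iff_one _).1 hne)
    obtain ⟨j, hj⟩ := hcover p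
    exact hj (hle (subset_radDiffGen _ _ ⟨j, rfl⟩))

/-- If the smallest radical differential ideal containing `b 1, …, b n` is all of `A`, the
open sets `X_{b i}` cover `X = Spec^Δ A`; conversely, for a Keigher ring, if the `X_{b i}`
cover `X` then the smallest radical differential ideal containing the `b i` is `A`. -/
theorem stmt19 {A : Type*} [CommRing A] {k : ℕ} (δ : Fin k → Derivation ℤ A A)
    (hcomm : ∀ i j a, δ i (δ j a) = δ j (δ i a)) (n : ℕ) (b : Fin n → A) :
    (radDiffGen (fun i => ⇑(δ i)) (Set.range b) = ⊤ →
      ∀ p : DiffSpec (fun i => ⇑(δ i)), ∃ j, b j ∉ p.1.asIdeal) ∧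
    (IsKeigher (fun i => ⇑(δ i)) →
      (∀ p : DiffSpec (fun i => ⇑(δ i)), ∃ j, b j ∉ p.1.asIdeal) →
      radDiffGen (fun i => ⇑(δ i)) (Set.range b) = ⊤) :=
  stmt19_general δ n b
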